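/- There exists a sequence of twice continuously differentiable functions φ_k : ℝ → ℝ, k ≥ 1, with nonnegative values, such that: (i) for every z ∈ ℝ the sequence (φ_k(z))_{k≥1} is nondecreasing and converges to z⁺ := max{z,0} as k → ∞; (ii) φ_k'(z) ∈ [0,1] for all z ≥ 0 and all k; (iii) φ_k(z) = 0 and φ_k'(z) = 0 for all z ≤ 0 and all k; (iv) φ_k''(x − y)·(√x − √y)² ≤ 2/k for all x, y ≥ 0 and all k. -/

import Mathlib

/-!
The approximants are `φ_k = z ↦ z · exp (-2⁻ᵏ (1 + z^(-1/k)))` on `(0, ∞)`, extended by `0`.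
At `0⁺` every derivative up to order two is a combination of terms `z^(-β) · exp (-d z^(-α))`,
which tend to `0`, so the gluing is `C²`. Writing `x = d z^(-α)`, one has
`φ' = e^(-d-x) (1 + α x) ≤ e^(-x) eˣ = 1` and `z φ''(z) = α e^(-d-x) x (1 - α + α x) ≤ 2α`
because `x + x² ≤ 2 eˣ`; bound (iv) then follows from `(√x - √y)² ≤ x - y` for `y ≤ x`.
The exponent `2⁻ᵏ (1 + z^(-1/k))` decreases in `k`: for `z ≤ 1` both factors do, and for `z ≥ 1`
the halving of `2⁻ᵏ` beats the growth of `z^(-1/k) ≤ 1`.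
-/

open Real Filter Topology Set

section IndicatorIoi

variable {F F' : ℝ → ℝ}

lemma indicator_Ioi_eventuallyEq_of_pos {y : ℝ} (hy : 0 < y) :
    (Ioi 0).indicator F =ᶠ[𝓝 y] F := by
  filter_upwards [Ioi_mem_nhds hy] with t ht using indicator_of_mem ht F

lemma indicator_Ioi_eventuallyEq_of_neg {y : ℝ} (hy : y < 0) :
    (Ioi 0).indicator F =ᶠ[𝓝 y] 0 := by
  filter_upwards [Iio_mem_nhds hy] with t ht using indicator_of_notMem (not_lt.2 ht.le) F

lemma continuousAt_zero_indicator_Ioi (hF : Tendsto F (𝓝[>] 0) (𝓝 0)) :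
    ContinuousAt ((Ioi 0).indicator F) 0 := by
  have hle : Tendsto ((Ioi 0).indicator F) (𝓝[≤] 0) (𝓝 0) :=
    tendsto_const_nhds.congr' <| eventually_nhdsWithin_of_forall fun t ht =>
      (indicator_of_notMem (not_lt.2 ht) F).symm
  have hgt : Tendsto ((Ioi 0).indicator F) (𝓝[>] 0) (𝓝 0) :=
    hF.congr' <| eventually_nhdsWithin_of_forall fun t ht => (indicator_of_mem ht F).symm
  simpa [ContinuousAt, ← nhdsLE_sup_nhdsGT] using hle.sup hgt

lemma continuous_indicator_Ioi (hcont : ∀ z > 0, ContinuousAt F z)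
    (hF : Tendsto F (𝓝[>] 0) (𝓝 0)) : Continuous ((Ioi 0).indicator F) := by
  refine continuous_iff_continuousAt.2 fun z => ?_
  rcases lt_trichotomy z 0 with hz | rfl | hz
  · exact continuousAt_const.congr (indicator_Ioi_eventuallyEq_of_neg hz).symm
  · exact continuousAt_zero_indicator_Ioi hF
  · exact (hcont z hz).congr (indicator_Ioi_eventuallyEq_of_pos hz).symm

lemma hasDerivAt_indicator_Ioi (hderiv : ∀ z > 0, HasDerivAt F (F' z) z)
    (hF : Tendsto F (𝓝[>] 0) (𝓝 0)) (hF' : Tendsto F' (𝓝[>] 0) (𝓝 0)) (z : ℝ) :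
    HasDerivAt ((Ioi 0).indicator F) ((Ioi 0).indicator F' z) z := by
  refine hasDerivAt_of_hasDerivAt_of_ne' (fun y hy => ?_) (continuousAt_zero_indicator_Ioi hF)
    (continuousAt_zero_indicator_Ioi hF') z
  rcases hy.lt_or_gt with hy | hy
  · rw [indicator_of_notMem (notMem_Ioi.2 hy.le)]
    exact (hasDerivAt_const y 0).congr_of_eventuallyEq (indicator_Ioi_eventuallyEq_of_neg hy)
  · rw [indicator_of_mem (mem_Ioi.2 hy)]
    exact (hderiv y hy).congr_of_eventuallyEq (indicator_Ioi_eventuallyEq_of_pos hy)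

end IndicatorIoi

lemma contDiff_two_indicator_Ioi {F F' F'' : ℝ → ℝ}
    (hderiv : ∀ z > 0, HasDerivAt F (F' z) z) (hderiv' : ∀ z > 0, HasDerivAt F' (F'' z) z)
    (hcont'' : ∀ z > 0, ContinuousAt F'' z)
    (hF : Tendsto F (𝓝[>] 0) (𝓝 0)) (hF' : Tendsto F' (𝓝[>] 0) (𝓝 0))
    (hF'' : Tendsto F'' (𝓝[>] 0) (𝓝 0)) : ContDiff ℝ 2 ((Ioi 0).indicator F) := by
  have hd := hasDerivAt_indicator_Ioi hderiv hF hF'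
  have hd' := hasDerivAt_indicator_Ioi hderiv' hF' hF''
  rw [show (2 : WithTop ℕ∞) = 1 + 1 from rfl, contDiff_succ_iff_deriv]
  refine ⟨fun z => (hd z).differentiableAt, by simp, ?_⟩
  rw [funext fun z => (hd z).deriv, contDiff_one_iff_deriv, funext fun z => (hd' z).deriv]
  exact ⟨fun z => (hd' z).differentiableAt, continuous_indicator_Ioi hcont'' hF''⟩

lemma sq_sqrt_sub_sqrt_le {x y : ℝ} (hy : 0 ≤ y) (hyx : y ≤ x) :
    (√x - √y) ^ 2 ≤ x - y := by
  have hsub : 0 ≤ √x - √y := sub_nonneg.2 (Real.sqrt_le_sqrt hyx)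
  calc (√x - √y) ^ 2 = (√x - √y) * (√x - √y) := sq _
    _ ≤ (√x - √y) * (√x + √y) := by gcongr; linarith [Real.sqrt_nonneg y]
    _ = x - y := by ring_nf; rw [Real.sq_sqrt hy, Real.sq_sqrt (hy.trans hyx)]

lemma tendsto_rpow_neg_mul_exp_nhdsGT_zero {α d : ℝ} (hα : 0 < α) (hd : 0 < d) (β : ℝ) :
    Tendsto (fun z : ℝ => z ^ (-β) * exp (-d * (1 + z ^ (-α)))) (𝓝[>] 0) (𝓝 0) := by
  have hu := tendsto_rpow_neg_nhdsGT_zero (neg_lt_zero.2 hα)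
  have h := ((tendsto_rpow_mul_exp_neg_mul_atTop_nhds_zero (β / α) d hd).comp hu).const_mul
    (exp (-d))
  rw [mul_zero] at h
  refine h.congr' <| eventually_nhdsWithin_of_forall fun z (hz : 0 < z) => ?_
  have hβ : (z ^ (-α)) ^ (β / α) = z ^ (-β) := by
    rw [← rpow_mul hz.le, neg_mul, mul_div_cancel₀ _ hα.ne']
  simp only [Function.comp_apply, hβ, mul_add, mul_one, exp_add]
  ring

noncomputable def smoothRamp (α d z : ℝ) : ℝ := z * exp (-d * (1 + z ^ (-α)))

noncomputable def smoothRampDeriv (α d z : ℝ) : ℝ :=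
  exp (-d * (1 + z ^ (-α))) * (1 + d * α * z ^ (-α))

noncomputable def smoothRampDeriv2 (α d z : ℝ) : ℝ :=
  exp (-d * (1 + z ^ (-α))) * (d * α * z ^ (-α - 1)) * (1 - α + d * α * z ^ (-α))

section

variable {α d : ℝ}

lemma tendsto_smoothRamp_nhdsGT_zero (hα : 0 < α) (hd : 0 < d) :
    Tendsto (smoothRamp α d) (𝓝[>] 0) (𝓝 0) := by
  refine (tendsto_rpow_neg_mul_exp_nhdsGT_zero hα hd (-1)).congr fun z => ?_
  rw [neg_neg, rpow_one, smoothRamp]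

lemma tendsto_smoothRampDeriv_nhdsGT_zero (hα : 0 < α) (hd : 0 < d) :
    Tendsto (smoothRampDeriv α d) (𝓝[>] 0) (𝓝 0) := by
  have h := (tendsto_rpow_neg_mul_exp_nhdsGT_zero hα hd 0).add
    ((tendsto_rpow_neg_mul_exp_nhdsGT_zero hα hd α).const_mul (d * α))
  rw [mul_zero, add_zero] at h
  refine h.congr fun z => ?_
  simp only [smoothRampDeriv, neg_zero, rpow_zero]
  ring

lemma tendsto_smoothRampDeriv2_nhdsGT_zero (hα : 0 < α) (hd : 0 < d) :
    Tendsto (smoothRampDeriv2 α d) (𝓝[>] 0) (𝓝 0) := by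
  have h := ((tendsto_rpow_neg_mul_exp_nhdsGT_zero hα hd (α + 1)).const_mul
    (d * α * (1 - α))).add
    ((tendsto_rpow_neg_mul_exp_nhdsGT_zero hα hd (2 * α + 1)).const_mul ((d * α) ^ 2))
  rw [mul_zero, zero_add, mul_zero] at h
  refine h.congr' <| eventually_nhdsWithin_of_forall fun z (hz : 0 < z) => ?_
  rw [smoothRampDeriv2, show -(2 * α + 1) = (-α - 1) + -α by ring,
    show -(α + 1) = -α - 1 by ring, rpow_add hz]
  ring

lemma hasDerivAt_exp_neg_mul_one_add_rpow_neg {z : ℝ} (hz : 0 < z) :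
    HasDerivAt (fun t : ℝ => exp (-d * (1 + t ^ (-α))))
      (exp (-d * (1 + z ^ (-α))) * (d * α * z ^ (-α - 1))) z := by
  have h := (((hasDerivAt_rpow_const (p := -α) (Or.inl hz.ne')).const_add 1).const_mul (-d)).exp
  convert h using 1
  ring

lemma hasDerivAt_smoothRamp {z : ℝ} (hz : 0 < z) :
    HasDerivAt (smoothRamp α d) (smoothRampDeriv α d z) z := by
  refine ((hasDerivAt_id' z).mul
    (hasDerivAt_exp_neg_mul_one_add_rpow_neg (α := α) (d := d) hz)).congr_deriv ?_
  have hpow : z * z ^ (-α - 1) = z ^ (-α) := by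
    rw [mul_comm, ← rpow_add_one hz.ne']; ring_nf
  rw [smoothRampDeriv]
  linear_combination exp (-d * (1 + z ^ (-α))) * d * α * hpow

lemma hasDerivAt_smoothRampDeriv {z : ℝ} (hz : 0 < z) :
    HasDerivAt (smoothRampDeriv α d) (smoothRampDeriv2 α d z) z := by
  have hfac := ((hasDerivAt_rpow_const (p := -α) (Or.inl hz.ne')).const_mul (d * α)).const_add 1
  refine ((hasDerivAt_exp_neg_mul_one_add_rpow_neg (α := α) (d := d) hz).mul hfac).congr_deriv ?_
  rw [smoothRampDeriv2]
  ring

lemma continuousAt_smoothRampDeriv2 {z : ℝ} (hz : 0 < z) :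
    ContinuousAt (smoothRampDeriv2 α d) z := by
  have hr (p : ℝ) : ContinuousAt (fun t : ℝ => t ^ p) z :=
    continuousAt_rpow_const z p (Or.inl hz.ne')
  unfold smoothRampDeriv2
  fun_prop

lemma smoothRampDeriv_mem_Icc (hα : 0 ≤ α) (hα1 : α ≤ 1) (hd : 0 ≤ d) {z : ℝ}
    (hz : 0 ≤ z) : smoothRampDeriv α d z ∈ Icc 0 1 := by
  have hu := rpow_nonneg hz (-α)
  have hdu := mul_nonneg hd hu
  refine ⟨mul_nonneg (exp_pos _).le (by nlinarith), ?_⟩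
  calc smoothRampDeriv α d z ≤ exp (-(d * z ^ (-α))) * exp (d * z ^ (-α)) := by
        refine mul_le_mul (exp_le_exp.2 (by nlinarith)) ?_ (by nlinarith) (exp_pos _).le
        nlinarith [add_one_le_exp (d * z ^ (-α))]
    _ = 1 := by rw [← exp_add, neg_add_cancel, exp_zero]

lemma smoothRampDeriv2_nonneg (hα : 0 ≤ α) (hα1 : α ≤ 1) (hd : 0 ≤ d) {z : ℝ}
    (hz : 0 ≤ z) : 0 ≤ smoothRampDeriv2 α d z := by
  have hdαu := mul_nonneg (mul_nonneg hd hα) (rpow_nonneg hz (-α))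
  exact mul_nonneg (mul_nonneg (exp_pos _).le
    (mul_nonneg (mul_nonneg hd hα) (rpow_nonneg hz _))) (by linarith)

lemma smoothRampDeriv2_mul_self_le (hα : 0 ≤ α) (hα1 : α ≤ 1) (hd : 0 ≤ d) {z : ℝ}
    (hz : 0 < z) : smoothRampDeriv2 α d z * z ≤ 2 * α := by
  set x := d * z ^ (-α)
  have hx : 0 ≤ x := mul_nonneg hd (rpow_nonneg hz.le _)
  have hpow : z ^ (-α - 1) * z = z ^ (-α) := by rw [← rpow_add_one hz.ne']; ring_nf
  have hpoly : x * (1 - α + α * x) ≤ 2 * exp x := by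
    nlinarith [quadratic_le_exp_of_nonneg hx, mul_nonneg (sq_nonneg x) (sub_nonneg.2 hα1),
      mul_nonneg hα hx]
  calc smoothRampDeriv2 α d z * z
      = α * (exp (-d * (1 + z ^ (-α))) * (x * (1 - α + α * x))) := by
        rw [smoothRampDeriv2]
        linear_combination exp (-d * (1 + z ^ (-α))) * d * α * (1 - α + α * x) * hpow
    _ ≤ α * (exp (-x) * (2 * exp x)) := by
        refine mul_le_mul_of_nonneg_left (mul_le_mul (exp_le_exp.2 (by nlinarith)) hpoly
          (mul_nonneg hx (by nlinarith [mul_nonneg hα hx])) (exp_pos _).le) hα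
    _ = 2 * α := by rw [exp_neg]; field_simp

end

lemma smoothRamp_le_smoothRamp {α α' d d' z : ℝ} (hα' : 0 ≤ α') (hαα' : α' ≤ α)
    (hd' : 0 ≤ d') (hdd' : 2 * d' ≤ d) (hz : 0 < z) : smoothRamp α d z ≤ smoothRamp α' d' z := by
  suffices h : d' * (1 + z ^ (-α')) ≤ d * (1 + z ^ (-α)) by
    refine mul_le_mul_of_nonneg_left (exp_le_exp.2 ?_) hz.le
    rwa [neg_mul, neg_mul, neg_le_neg_iff]
  rcases le_or_gt z 1 with hz1 | hz1
  · have hpow : z ^ (-α') ≤ z ^ (-α) := rpow_le_rpow_of_exponent_ge hz hz1 (neg_le_neg hαα')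
    exact mul_le_mul (by linarith) (by linarith) (add_nonneg zero_le_one (rpow_nonneg hz.le _))
      (by linarith)
  · have hpow : z ^ (-α') ≤ 1 := rpow_le_one_of_one_le_of_nonpos hz1.le (neg_nonpos.2 hα')
    nlinarith [mul_le_mul_of_nonneg_left hpow hd',
      mul_nonneg (by linarith : 0 ≤ d) (rpow_nonneg hz.le (-α))]

lemma tendsto_smoothRamp {ι : Type*} {l : Filter ι} {α d : ι → ℝ}
    (hα : Tendsto α l (𝓝 0)) (hd : Tendsto d l (𝓝 0)) {z : ℝ} (hz : 0 < z) :
    Tendsto (fun i => smoothRamp (α i) (d i) z) l (𝓝 z) := by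
  have h : Tendsto (fun i => z * exp (-d i * (1 + z ^ (-α i)))) l
      (𝓝 (z * exp (-0 * (1 + z ^ (-0 : ℝ))))) :=
    tendsto_const_nhds.mul ((hd.neg.mul (tendsto_const_nhds.add
      (tendsto_const_nhds.rpow hα.neg (Or.inl hz.ne')))).rexp)
  simpa [smoothRamp] using h

noncomputable def smoothPosPart (α d : ℝ) : ℝ → ℝ := (Ioi 0).indicator (smoothRamp α d)

section

variable {α d : ℝ}

lemma smoothPosPart_nonneg (z : ℝ) : 0 ≤ smoothPosPart α d z :=
  indicator_nonneg (fun z (hz : 0 < z) => mul_nonneg hz.le (exp_pos _).le) z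

lemma smoothPosPart_of_nonpos {z : ℝ} (hz : z ≤ 0) : smoothPosPart α d z = 0 :=
  indicator_of_notMem (notMem_Ioi.2 hz) _

lemma hasDerivAt_smoothPosPart (hα : 0 < α) (hd : 0 < d) (z : ℝ) :
    HasDerivAt (smoothPosPart α d) ((Ioi 0).indicator (smoothRampDeriv α d) z) z :=
  hasDerivAt_indicator_Ioi (fun _ => hasDerivAt_smoothRamp)
    (tendsto_smoothRamp_nhdsGT_zero hα hd) (tendsto_smoothRampDeriv_nhdsGT_zero hα hd) z

lemma deriv_smoothPosPart (hα : 0 < α) (hd : 0 < d) :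
    deriv (smoothPosPart α d) = (Ioi 0).indicator (smoothRampDeriv α d) :=
  funext fun z => (hasDerivAt_smoothPosPart hα hd z).deriv

lemma deriv_deriv_smoothPosPart (hα : 0 < α) (hd : 0 < d) :
    deriv (deriv (smoothPosPart α d)) = (Ioi 0).indicator (smoothRampDeriv2 α d) := by
  rw [deriv_smoothPosPart hα hd]
  exact funext fun z => (hasDerivAt_indicator_Ioi (fun _ => hasDerivAt_smoothRampDeriv)
    (tendsto_smoothRampDeriv_nhdsGT_zero hα hd)
    (tendsto_smoothRampDeriv2_nhdsGT_zero hα hd) z).deriv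

lemma contDiff_smoothPosPart (hα : 0 < α) (hd : 0 < d) : ContDiff ℝ 2 (smoothPosPart α d) :=
  contDiff_two_indicator_Ioi (fun _ => hasDerivAt_smoothRamp) (fun _ => hasDerivAt_smoothRampDeriv)
    (fun _ => continuousAt_smoothRampDeriv2) (tendsto_smoothRamp_nhdsGT_zero hα hd)
    (tendsto_smoothRampDeriv_nhdsGT_zero hα hd) (tendsto_smoothRampDeriv2_nhdsGT_zero hα hd)

lemma deriv_smoothPosPart_mem_Icc (hα : 0 < α) (hα1 : α ≤ 1) (hd : 0 < d) (z : ℝ) :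
    deriv (smoothPosPart α d) z ∈ Icc 0 1 := by
  rw [deriv_smoothPosPart hα hd, indicator_apply]
  split_ifs with hz
  · exact smoothRampDeriv_mem_Icc hα.le hα1 hd.le (le_of_lt hz)
  · exact ⟨le_rfl, zero_le_one⟩

lemma deriv_smoothPosPart_of_nonpos (hα : 0 < α) (hd : 0 < d) {z : ℝ} (hz : z ≤ 0) :
    deriv (smoothPosPart α d) z = 0 := by
  rw [deriv_smoothPosPart hα hd, indicator_of_notMem (notMem_Ioi.2 hz)]

lemma deriv_deriv_smoothPosPart_mul_sq_sqrt_sub_le (hα : 0 < α) (hα1 : α ≤ 1) (hd : 0 < d)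
    {x y : ℝ} (hy : 0 ≤ y) :
    deriv (deriv (smoothPosPart α d)) (x - y) * (√x - √y) ^ 2 ≤ 2 * α := by
  rw [deriv_deriv_smoothPosPart hα hd]
  rcases le_or_gt (x - y) 0 with hxy | hxy
  · rw [indicator_of_notMem (notMem_Ioi.2 hxy), zero_mul]
    positivity
  calc (Ioi 0).indicator (smoothRampDeriv2 α d) (x - y) * (√x - √y) ^ 2
      ≤ smoothRampDeriv2 α d (x - y) * (x - y) := by
        rw [indicator_of_mem (mem_Ioi.2 hxy)]
        exact mul_le_mul_of_nonneg_left (sq_sqrt_sub_sqrt_le hy (by linarith))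
          (smoothRampDeriv2_nonneg hα.le hα1 hd.le hxy.le)
    _ ≤ 2 * α := smoothRampDeriv2_mul_self_le hα.le hα1 hd.le hxy

end

lemma smoothPosPart_le_smoothPosPart {α α' d d' : ℝ} (hα' : 0 ≤ α') (hαα' : α' ≤ α)
    (hd' : 0 ≤ d') (hdd' : 2 * d' ≤ d) (z : ℝ) :
    smoothPosPart α d z ≤ smoothPosPart α' d' z :=
  indicator_le_indicator' fun hz => smoothRamp_le_smoothRamp hα' hαα' hd' hdd' hz

lemma tendsto_smoothPosPart {ι : Type*} {l : Filter ι} {α d : ι → ℝ}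
    (hα : Tendsto α l (𝓝 0)) (hd : Tendsto d l (𝓝 0)) (z : ℝ) :
    Tendsto (fun i => smoothPosPart (α i) (d i) z) l (𝓝 (max z 0)) := by
  rcases le_or_gt z 0 with hz | hz
  · simp only [smoothPosPart_of_nonpos hz, max_eq_right hz, tendsto_const_nhds]
  · simpa only [smoothPosPart, indicator_of_mem (mem_Ioi.2 hz), max_eq_left hz.le]
      using tendsto_smoothRamp hα hd hz

theorem exists_smooth_approx_pos_part :
    ∃ φ : ℕ → ℝ → ℝ,
      (∀ k, 1 ≤ k → ContDiff ℝ 2 (φ k)) ∧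
      (∀ k, 1 ≤ k → ∀ z : ℝ, 0 ≤ φ k z) ∧
      (∀ z : ℝ, ∀ k l : ℕ, 1 ≤ k → k ≤ l → φ k z ≤ φ l z) ∧
      (∀ z : ℝ, Filter.Tendsto (fun k => φ k z) Filter.atTop (nhds (max z 0))) ∧
      (∀ k, 1 ≤ k → ∀ z : ℝ, 0 ≤ z → deriv (φ k) z ∈ Set.Icc (0 : ℝ) 1) ∧
      (∀ k, 1 ≤ k → ∀ z : ℝ, z ≤ 0 → φ k z = 0 ∧ deriv (φ k) z = 0) ∧
      (∀ k, 1 ≤ k → ∀ x y : ℝ, 0 ≤ x → 0 ≤ y →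
        deriv (deriv (φ k)) (x - y) * (Real.sqrt x - Real.sqrt y) ^ 2 ≤ 2 / (k : ℝ)) := by
  have hα : ∀ k : ℕ, 1 ≤ k → 0 < (k : ℝ)⁻¹ ∧ (k : ℝ)⁻¹ ≤ 1 := fun k hk =>
    ⟨by positivity, inv_le_one_of_one_le₀ (by exact_mod_cast hk)⟩
  have hd : ∀ k : ℕ, 0 < (1 / 2 : ℝ) ^ k := fun k => by positivity
  refine ⟨fun k => smoothPosPart (k : ℝ)⁻¹ ((1 / 2) ^ k), fun k hk => contDiff_smoothPosPart
    (hα k hk).1 (hd k), fun k _ z => smoothPosPart_nonneg z, fun z k l hk hkl => ?_,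
    fun z => tendsto_smoothPosPart tendsto_inv_atTop_nhds_zero_nat
      (tendsto_pow_atTop_nhds_zero_of_lt_one (by norm_num) (by norm_num)) z,
    fun k hk z _ => deriv_smoothPosPart_mem_Icc (hα k hk).1 (hα k hk).2 (hd k) z,
    fun k hk z hz => ⟨smoothPosPart_of_nonpos hz,
      deriv_smoothPosPart_of_nonpos (hα k hk).1 (hd k) hz⟩,
    fun k hk x y _ hy => ?_⟩
  · refine monotoneOn_nat_Ici_of_le_succ
      (f := fun n => smoothPosPart (n : ℝ)⁻¹ ((1 / 2) ^ n) z) (fun n hn => ?_) hk (hk.trans hkl) hkl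
    refine smoothPosPart_le_smoothPosPart (by positivity) ?_ (hd _).le (le_of_eq (by ring)) z
    exact inv_anti₀ (by exact_mod_cast hn) (by push_cast; linarith)
  · simpa [div_eq_mul_inv] using
      deriv_deriv_smoothPosPart_mul_sq_sqrt_sub_le (hα k hk).1 (hα k hk).2 (hd k) hy
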